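/- Kato–Ponce type commutator estimate: let s > 2, u ∈ H^s(T^2), and a ∈ H^s(T^2, R^2). Then the commutator [Λ^s, a·∇]u satisfies ||[Λ^s, a·∇]u||_{L^2} ≤ C(s) ||a||_{H^s} ||u||_{H^s}. -/

import Mathlib

/-!
Kato–Ponce type commutator estimate on `T²`, Fourier-side formulation:
for `s > 2`, `‖[Λ^s, a·∇]u‖_{L²} ≤ C(s) ‖a‖_{H^s} ‖u‖_{H^s}`, where
`Λ^s` is the Fourier multiplier with symbol `⟨ξ⟩^s`.
-/

open scoped ENNReal NNReal

noncomputable section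

/-- Japanese bracket `⟨k⟩ = max{1, |k|}`. -/
def jap (k : Fin 2 → ℤ) : ℝ :=
  max 1 (Real.sqrt (∑ i, ((k i : ℝ)) ^ 2))

/-- `H^s(T²)` norm via Fourier coefficients. -/
def sobNorm (s : ℝ) (u : (Fin 2 → ℤ) → ℂ) : ℝ≥0∞ :=
  (∑' k : Fin 2 → ℤ,
      ENNReal.ofReal (jap k ^ (2 * s)) * (‖u k‖₊ : ℝ≥0∞) ^ 2) ^ (1/2 : ℝ)

/-- `H^s(T², ℂ²)` norm of a vector field via Fourier coefficients. -/
def sobNormV (s : ℝ) (a : (Fin 2 → ℤ) → Fin 2 → ℂ) : ℝ≥0∞ :=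
  (∑' k : Fin 2 → ℤ,
      ENNReal.ofReal (jap k ^ (2 * s)) * ((‖a k 0‖₊ : ℝ≥0∞) ^ 2 + (‖a k 1‖₊ : ℝ≥0∞) ^ 2))
    ^ (1/2 : ℝ)

/-- `L²(T²)` norm via Fourier coefficients. -/
def l2Norm (u : (Fin 2 → ℤ) → ℂ) : ℝ≥0∞ :=
  (∑' k : Fin 2 → ℤ, (‖u k‖₊ : ℝ≥0∞) ^ 2) ^ (1/2 : ℝ)

/-- Fourier coefficients of the transport term `a·∇u`:
`(a·∇u)^(k) = ∑_m ( ∑_j â_j(m) i (k−m)_j ) û(k−m)`. -/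
def transport (a : (Fin 2 → ℤ) → Fin 2 → ℂ) (u : (Fin 2 → ℤ) → ℂ) (k : Fin 2 → ℤ) : ℂ :=
  ∑' m : Fin 2 → ℤ,
    (∑ i : Fin 2, a m i * (Complex.I * (((k - m) i : ℝ) : ℂ))) * u (k - m)

/-- Fourier coefficients of the commutator `[Λ^s, a·∇]u = Λ^s(a·∇u) − a·∇(Λ^s u)`. -/
def commLam (s : ℝ) (a : (Fin 2 → ℤ) → Fin 2 → ℂ) (u : (Fin 2 → ℤ) → ℂ)
    (k : Fin 2 → ℤ) : ℂ :=
  ((jap k ^ s : ℝ) : ℂ) * transport a u k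
    - transport a (fun m => ((jap m ^ s : ℝ) : ℂ) * u m) k


abbrev Z2 := Fin 2 → ℤ

section Aux
open MeasureTheory

def nrm (k : Fin 2 → ℤ) : ℝ := Real.sqrt (∑ i, ((k i : ℝ)) ^ 2)

lemma jap_def (k : Fin 2 → ℤ) : jap k = max 1 (nrm k) := rfl
lemma one_le_jap (k : Fin 2 → ℤ) : 1 ≤ jap k := le_max_left _ _
lemma jap_pos (k : Fin 2 → ℤ) : 0 < jap k := lt_of_lt_of_le one_pos (one_le_jap k)
lemma nrm_nonneg (k : Fin 2 → ℤ) : 0 ≤ nrm k := Real.sqrt_nonneg _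
lemma nrm_le_jap (k : Fin 2 → ℤ) : nrm k ≤ jap k := le_max_right _ _

lemma nrm_coords (k : Fin 2 → ℤ) : nrm k = Real.sqrt ((k 0 : ℝ)^2 + (k 1 : ℝ)^2) := by
  simp [nrm, Fin.sum_univ_two]

lemma sqrt_triangle (a b c d : ℝ) :
    Real.sqrt ((a+c)^2 + (b+d)^2) ≤ Real.sqrt (a^2+b^2) + Real.sqrt (c^2+d^2) := by
  have h1 : (0:ℝ) ≤ a^2+b^2 := by positivity
  have h2 : (0:ℝ) ≤ c^2+d^2 := by positivity
  have hs1 := Real.sq_sqrt h1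
  have hs2 := Real.sq_sqrt h2
  have hn1 := Real.sqrt_nonneg (a^2+b^2)
  have hn2 := Real.sqrt_nonneg (c^2+d^2)
  have key : a*c + b*d ≤ Real.sqrt (a^2+b^2) * Real.sqrt (c^2+d^2) := by
    rw [← Real.sqrt_mul h1]
    rcases le_total (a*c+b*d) 0 with h | h
    · exact h.trans (Real.sqrt_nonneg _)
    · have : (a*c+b*d)^2 ≤ (a^2+b^2)*(c^2+d^2) := by nlinarith [sq_nonneg (a*d - b*c)]
      calc a*c+b*d = Real.sqrt ((a*c+b*d)^2) := (Real.sqrt_sq h).symm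
        _ ≤ _ := Real.sqrt_le_sqrt this
  calc Real.sqrt ((a+c)^2 + (b+d)^2)
      ≤ Real.sqrt ((Real.sqrt (a^2+b^2) + Real.sqrt (c^2+d^2))^2) := by
        apply Real.sqrt_le_sqrt; nlinarith
    _ = _ := Real.sqrt_sq (by positivity)

lemma nrm_add_le (x y : Fin 2 → ℤ) : nrm (x + y) ≤ nrm x + nrm y := by
  rw [nrm_coords, nrm_coords, nrm_coords]
  have h0 : ((x+y) 0 : ℝ) = (x 0 : ℝ) + (y 0 : ℝ) := by simp
  have h1 : ((x+y) 1 : ℝ) = (x 1 : ℝ) + (y 1 : ℝ) := by simp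
  rw [h0, h1]
  exact sqrt_triangle _ _ _ _

lemma nrm_sub_le (k n : Fin 2 → ℤ) : nrm k - nrm n ≤ nrm (k - n) := by
  have := nrm_add_le n (k - n)
  simp only [add_sub_cancel] at this
  linarith

lemma jap_sub_le (k n : Fin 2 → ℤ) : jap k - jap n ≤ nrm (k - n) := by
  have h1 := nrm_sub_le k n
  rw [jap_def, jap_def]
  have h2 := nrm_nonneg (k - n)
  have h3 := le_max_left 1 (nrm n)
  have h4 := le_max_right 1 (nrm n)
  have : max 1 (nrm k) ≤ max 1 (nrm n) + nrm (k - n) := by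
    apply max_le <;> linarith
  linarith

lemma jap_neg (k : Fin 2 → ℤ) : jap (-k) = jap k := by
  unfold jap
  congr 2
  refine Finset.sum_congr rfl fun i _ => ?_
  have : ((-k) i : ℝ) = -(k i : ℝ) := by simp
  rw [this]; ring

lemma abs_jap_sub_le (k n : Fin 2 → ℤ) : |jap k - jap n| ≤ jap (k - n) := by
  rw [abs_sub_le_iff]
  refine ⟨(jap_sub_le k n).trans (nrm_le_jap _), ?_⟩
  have h := (jap_sub_le n k).trans (nrm_le_jap _)
  have hnk : n - k = -(k - n) := by abel
  rw [hnk, jap_neg] at h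
  linarith

lemma abs_coord_le_jap (k : Fin 2 → ℤ) (i : Fin 2) : |(k i : ℝ)| ≤ jap k := by
  refine le_trans ?_ (nrm_le_jap k)
  rw [← Real.sqrt_sq_eq_abs]
  apply Real.sqrt_le_sqrt
  exact Finset.single_le_sum (f := fun j => ((k j:ℝ))^2) (fun j _ => sq_nonneg _) (Finset.mem_univ i)

lemma jap_triangle (k n : Fin 2 → ℤ) : jap k ≤ jap n + jap (k - n) := by
  have h1 := jap_sub_le k n
  have h2 := nrm_le_jap (k - n)
  linarith

lemma rpow_diff {x y s : ℝ} (hy : 1 ≤ y) (hxy : y ≤ x) (hs : 1 ≤ s) :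
    x ^ s - y ^ s ≤ s * x ^ (s - 1) * (x - y) := by
  have hx : (0:ℝ) < x := by linarith
  have hy0 : (0:ℝ) ≤ y := by linarith
  have hb := one_add_mul_self_le_rpow_one_add (s := y / x - 1) (by
    have : 0 ≤ y / x := div_nonneg hy0 hx.le
    linarith) hs
  have h1 : (1 + (y / x - 1)) = y / x := by ring
  rw [h1] at hb
  have hb' := mul_le_mul_of_nonneg_right hb (Real.rpow_nonneg hx.le s)
  have h2 : (y / x) ^ s * x ^ s = y ^ s := by
    rw [← Real.mul_rpow (div_nonneg hy0 hx.le) hx.le, div_mul_cancel₀ _ hx.ne']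
  rw [h2] at hb'
  have hxs : x ^ s = x ^ (s - 1) * x := by
    rw [← Real.rpow_add_one hx.ne' (s - 1)]; ring_nf
  rw [hxs] at hb' ⊢
  have hyx : y / x * (x ^ (s-1) * x) = y * x ^ (s-1) := by
    field_simp
  nlinarith [hb', Real.rpow_nonneg hx.le (s-1)]

lemma abs_rpow_diff {x y s : ℝ} (hx : 1 ≤ x) (hy : 1 ≤ y) (hs : 1 ≤ s) :
    |x ^ s - y ^ s| ≤ s * (max x y) ^ (s - 1) * |x - y| := by
  rcases le_total y x with h | h
  · rw [abs_of_nonneg (by nlinarith [Real.rpow_le_rpow (by linarith : (0:ℝ) ≤ y) h (by linarith : (0:ℝ) ≤ s)] : (0:ℝ) ≤ x ^ s - y ^ s), abs_of_nonneg (by linarith), max_eq_left h]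
    exact rpow_diff hy h hs
  · rw [abs_sub_comm, abs_sub_comm x y, abs_of_nonneg (by nlinarith [Real.rpow_le_rpow (by linarith : (0:ℝ) ≤ x) h (by linarith : (0:ℝ) ≤ s)] : (0:ℝ) ≤ y ^ s - x ^ s), abs_of_nonneg (by linarith), max_eq_right h]
    exact rpow_diff hx h hs

-- key inequality
lemma key_ineq {s : ℝ} (hs : 2 < s) (k m : Z2) :
    |jap k ^ s - jap (k - m) ^ s| * jap (k - m) ≤
      (s * 2 ^ (s - 1)) *
        ((jap m ^ (1 - s) + jap (k - m) ^ (1 - s)) * (jap m ^ s * jap (k - m) ^ s)) := by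
  set jm := jap m with hjm
  set jn := jap (k - m) with hjn
  set jk := jap k with hjk
  have h1m : (1:ℝ) ≤ jm := one_le_jap m
  have h1n : (1:ℝ) ≤ jn := one_le_jap (k - m)
  have h1k : (1:ℝ) ≤ jk := one_le_jap k
  have hs1 : (1:ℝ) ≤ s := by linarith
  -- |jk - jn| ≤ jm
  have hdiff : |jk - jn| ≤ jm := by
    have := abs_jap_sub_le k (k - m)
    have hkm : k - (k - m) = m := by abel
    rwa [hkm] at this
  -- max bound
  have hmax : max jk jn ≤ jn + jm := by
    have h := jap_triangle k (k - m)
    have hkm : k - (k - m) = m := by abel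
    rw [hkm] at h
    exact max_le (by linarith) (by linarith [one_le_jap m])
  have hmaxpos : (1:ℝ) ≤ max jk jn := le_max_of_le_left h1k
  -- (max jk jn)^(s-1) ≤ 2^(s-1) * (jn^(s-1) + jm^(s-1))
  have hpow : (max jk jn) ^ (s-1) ≤ 2 ^ (s-1) * (jn ^ (s-1) + jm ^ (s-1)) := by
    have h2 : max jk jn ≤ 2 * max jn jm := by
      rcases le_total jn jm with h | h
      · rw [max_eq_right h]; linarith [hmax]
      · rw [max_eq_left h]; linarith [hmax]
    have h3 : (max jk jn) ^ (s-1) ≤ (2 * max jn jm) ^ (s-1) :=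
      Real.rpow_le_rpow (by linarith) h2 (by linarith)
    have h4 : (2 * max jn jm) ^ (s-1) = 2 ^ (s-1) * (max jn jm) ^ (s-1) :=
      Real.mul_rpow (by norm_num) (by rcases le_total jn jm with h|h <;> simp [max_eq_right, max_eq_left, h] <;> linarith)
    have h5 : (max jn jm) ^ (s-1) ≤ jn ^ (s-1) + jm ^ (s-1) := by
      rcases le_total jn jm with h | h
      · rw [max_eq_right h]
        have := Real.rpow_nonneg (by linarith : (0:ℝ) ≤ jn) (s-1)
        linarith
      · rw [max_eq_left h]
        have := Real.rpow_nonneg (by linarith : (0:ℝ) ≤ jm) (s-1)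
        linarith
    calc (max jk jn) ^ (s-1) ≤ 2 ^ (s-1) * (max jn jm) ^ (s-1) := by rw [← h4]; exact h3
      _ ≤ 2 ^ (s-1) * (jn ^ (s-1) + jm ^ (s-1)) := by
          have : (0:ℝ) ≤ 2 ^ (s-1) := Real.rpow_nonneg (by norm_num) _
          nlinarith
  have hkey : |jk ^ s - jn ^ s| ≤ s * (2 ^ (s-1) * (jn ^ (s-1) + jm ^ (s-1))) * jm := by
    calc |jk ^ s - jn ^ s| ≤ s * (max jk jn) ^ (s-1) * |jk - jn| := abs_rpow_diff h1k h1n hs1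
      _ ≤ s * (2 ^ (s-1) * (jn ^ (s-1) + jm ^ (s-1))) * jm := by
          have hns : (0:ℝ) ≤ s := by linarith
          have h6 : (0:ℝ) ≤ (max jk jn) ^ (s-1) := Real.rpow_nonneg (by linarith) _
          have h7 : (0:ℝ) ≤ |jk - jn| := abs_nonneg _
          have h8 : (0:ℝ) ≤ 2 ^ (s-1) * (jn ^ (s-1) + jm ^ (s-1)) := by
            have := Real.rpow_nonneg (by norm_num : (0:ℝ) ≤ 2) (s-1)
            have := Real.rpow_nonneg (by linarith : (0:ℝ) ≤ jn) (s-1)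
            have := Real.rpow_nonneg (by linarith : (0:ℝ) ≤ jm) (s-1)
            nlinarith
          nlinarith [mul_le_mul hpow hdiff h7 h8]
  -- identity: (jn^(s-1) + jm^(s-1)) * jm * jn = (jm^(1-s) + jn^(1-s)) * (jm^s * jn^s)
  have hid : (jn ^ (s-1) + jm ^ (s-1)) * jm * jn = (jm ^ (1-s) + jn ^ (1-s)) * (jm ^ s * jn ^ s) := by
    have e1 : jm ^ (1-s) * jm ^ s = jm := by
      rw [← Real.rpow_add (jap_pos m)]; norm_num; rfl
    have e2 : jn ^ (1-s) * jn ^ s = jn := by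
      rw [← Real.rpow_add (jap_pos (k - m))]; norm_num; rfl
    have e3 : jn ^ (s-1) * jn = jn ^ s := by
      rw [← Real.rpow_add_one (by positivity : jn ≠ 0) (s-1)]; ring_nf
    have e4 : jm ^ (s-1) * jm = jm ^ s := by
      rw [← Real.rpow_add_one (by positivity : jm ≠ 0) (s-1)]; ring_nf
    calc (jn ^ (s-1) + jm ^ (s-1)) * jm * jn = (jn ^ (s-1) * jn) * jm + (jm ^ (s-1) * jm) * jn := by ring
      _ = jn ^ s * jm + jm ^ s * jn := by rw [e3, e4]
      _ = (jm ^ (1-s) * jm ^ s) * jn ^ s + (jn ^ (1-s) * jn ^ s) * jm ^ s := by rw [e1, e2]; ring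
      _ = (jm ^ (1-s) + jn ^ (1-s)) * (jm ^ s * jn ^ s) := by ring
  calc |jk ^ s - jn ^ s| * jn ≤ (s * (2 ^ (s-1) * (jn ^ (s-1) + jm ^ (s-1))) * jm) * jn := by
        have : (0:ℝ) ≤ jn := by linarith
        nlinarith [abs_nonneg (jk ^ s - jn ^ s)]
    _ = (s * 2 ^ (s-1)) * ((jn ^ (s-1) + jm ^ (s-1)) * jm * jn) := by ring
    _ = (s * 2 ^ (s-1)) * ((jm ^ (1-s) + jn ^ (1-s)) * (jm ^ s * jn ^ s)) := by rw [hid]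


theorem myIsupRpow {ι : Sort*} [Nonempty ι] (f : ι → ℝ≥0∞) {c : ℝ} (hc : 0 < c) :
    (⨆ i, f i) ^ c = ⨆ i, f i ^ c := by
  have h := OrderIso.map_iSup (ENNReal.orderIsoRpow c hc) f
  simp only [ENNReal.orderIsoRpow_apply] at h
  exact h

theorem myMink2 (f g : Z2 → ℝ≥0∞) : (∑' k, (f k + g k) ^ (2:ℝ)) ^ (1/2:ℝ) ≤ (∑' k, f k ^ (2:ℝ)) ^ (1/2:ℝ) + (∑' k, g k ^ (2:ℝ)) ^ (1/2:ℝ) := by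
  have := ENNReal.lintegral_Lp_add_le (μ := Measure.count (α := Z2)) (measurable_of_countable f).aemeasurable (measurable_of_countable g).aemeasurable (one_le_two (α := ℝ))
  simpa [lintegral_count, one_div] using this

theorem myMinkFin (F : Z2 → Z2 → ℝ≥0∞) (S : Finset Z2) :
    (∑' k, (∑ m ∈ S, F m k) ^ (2:ℝ)) ^ (1/2:ℝ) ≤ ∑ m ∈ S, (∑' k, (F m k) ^ (2:ℝ)) ^ (1/2:ℝ) := by
  classical
  induction S using Finset.induction_on with
  | empty => simp [ENNReal.zero_rpow_of_pos]
  | insert a T hnot ih =>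
      calc (∑' k, (∑ m ∈ insert a T, F m k) ^ (2:ℝ)) ^ (1/2:ℝ)
          = (∑' k, (F a k + ∑ m ∈ T, F m k) ^ (2:ℝ)) ^ (1/2:ℝ) := by
            simp [Finset.sum_insert hnot]
        _ ≤ (∑' k, F a k ^ (2:ℝ)) ^ (1/2:ℝ) + (∑' k, (∑ m ∈ T, F m k) ^ (2:ℝ)) ^ (1/2:ℝ) :=
            myMink2 _ _
        _ ≤ _ := by rw [Finset.sum_insert hnot]; exact add_le_add_right ih _

theorem myMink (F : Z2 → Z2 → ℝ≥0∞) :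
    (∑' k, (∑' m, F m k) ^ (2:ℝ)) ^ (1/2:ℝ) ≤ ∑' m, (∑' k, (F m k) ^ (2:ℝ)) ^ (1/2:ℝ) := by
  classical
  have hdir : Directed (· ≤ ·) (fun S : Finset Z2 => fun k => (∑ m ∈ S, F m k) ^ (2:ℝ)) := by
    intro S T
    refine ⟨S ∪ T, fun k => ?_, fun k => ?_⟩ <;>
      exact ENNReal.rpow_le_rpow (Finset.sum_le_sum_of_subset (by simp)) (by norm_num)
  calc (∑' k, (∑' m, F m k) ^ (2:ℝ)) ^ (1/2:ℝ)
      = (∑' k, ⨆ S : Finset Z2, (∑ m ∈ S, F m k) ^ (2:ℝ)) ^ (1/2:ℝ) := by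
        congr 1; refine tsum_congr fun k => ?_
        rw [ENNReal.tsum_eq_iSup_sum]
        exact myIsupRpow _ (by norm_num)
    _ = (⨆ S : Finset Z2, ∑' k, (∑ m ∈ S, F m k) ^ (2:ℝ)) ^ (1/2:ℝ) := by
        congr 1
        have := lintegral_iSup_directed (μ := Measure.count (α := Z2))
          (f := fun S : Finset Z2 => fun k => (∑ m ∈ S, F m k) ^ (2:ℝ))
          (fun S => (measurable_of_countable _).aemeasurable) hdir
        simpa [lintegral_count] using this
    _ = ⨆ S : Finset Z2, (∑' k, (∑ m ∈ S, F m k) ^ (2:ℝ)) ^ (1/2:ℝ) :=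
        myIsupRpow _ (by norm_num)
    _ ≤ ∑' m, (∑' k, (F m k) ^ (2:ℝ)) ^ (1/2:ℝ) := by
        refine iSup_le fun S => (myMinkFin F S).trans ?_
        exact ENNReal.sum_le_tsum S

lemma oneD {q : ℝ} (hq : 1 < q) :
    ∑' z : ℤ, ENNReal.ofReal ((max 1 |(z:ℝ)|) ^ (-q)) < ⊤ := by
  have hsum : Summable (fun z : ℤ => (max 1 |(z:ℝ)|) ^ (-q)) := by
    have h1 : Summable (fun z : ℤ => |(z:ℝ)| ^ (-q)) := Real.summable_abs_int_rpow hq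
    have h2 : Summable (fun z : ℤ => if z = (0:ℤ) then (1:ℝ) else 0) :=
      (hasSum_ite_eq (0:ℤ) (1:ℝ)).summable
    have h3 := h1.add h2
    refine h3.congr fun z => ?_
    by_cases hz : z = 0
    · subst hz
      simp [Real.zero_rpow (by linarith : -q ≠ 0)]
    · have h1z : (1:ℝ) ≤ |(z:ℝ)| := by
        have : (1:ℤ) ≤ |z| := Int.one_le_abs hz
        calc (1:ℝ) = ((1:ℤ):ℝ) := by norm_num
          _ ≤ ((|z|:ℤ):ℝ) := by exact_mod_cast this
          _ = |(z:ℝ)| := by push_cast; ring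
      simp [hz, max_eq_right h1z]
  rw [← ENNReal.ofReal_tsum_of_nonneg (fun z => Real.rpow_nonneg (by positivity) _) hsum]
  exact ENNReal.ofReal_lt_top

lemma int_abs_le_sq (z : ℤ) : |(z:ℝ)| ≤ (z:ℝ)^2 := by
  rcases eq_or_ne z 0 with h | h
  · simp [h]
  · have : (1:ℝ) ≤ |(z:ℝ)| := by
      have : (1:ℤ) ≤ |z| := Int.one_le_abs h
      calc (1:ℝ) = ((1:ℤ):ℝ) := by norm_num
        _ ≤ ((|z|:ℤ):ℝ) := by exact_mod_cast this
        _ = |(z:ℝ)| := by push_cast; ring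
    nlinarith [sq_abs (z:ℝ)]

lemma japsq_ge (m : Z2) :
    (max 1 |(m 0 : ℝ)|) * (max 1 |(m 1 : ℝ)|) ≤ jap m ^ (2:ℝ) := by
  have hj : jap m ^ (2:ℝ) = max 1 ((m 0:ℝ)^2 + (m 1:ℝ)^2) := by
    have ht : (0:ℝ) ≤ (m 0:ℝ)^2 + (m 1:ℝ)^2 := by positivity
    have hja : jap m = max 1 (Real.sqrt ((m 0:ℝ)^2 + (m 1:ℝ)^2)) := by
      unfold jap; rw [Fin.sum_univ_two]
    rw [hja]
    rcases le_total ((m 0:ℝ)^2 + (m 1:ℝ)^2) 1 with h | h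
    · rw [max_eq_left (Real.sqrt_le_one.mpr h), max_eq_left h, Real.one_rpow]
    · have h1 : (1:ℝ) ≤ Real.sqrt ((m 0:ℝ)^2 + (m 1:ℝ)^2) := by
        rw [show (1:ℝ) = Real.sqrt 1 from (Real.sqrt_one).symm]
        exact Real.sqrt_le_sqrt h
      rw [max_eq_right h1, max_eq_right h, Real.rpow_two, sq, Real.mul_self_sqrt ht]
  rw [hj]
  have ha := int_abs_le_sq (m 0)
  have hb := int_abs_le_sq (m 1)
  have h0 : (0:ℝ) ≤ |(m 0:ℝ)| := abs_nonneg _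
  have h1 : (0:ℝ) ≤ |(m 1:ℝ)| := abs_nonneg _
  rcases le_total (|(m 0:ℝ)|) 1 with hA | hA <;> rcases le_total (|(m 1:ℝ)|) 1 with hB | hB
  · rw [max_eq_left hA, max_eq_left hB]; simp [le_max_iff]
  · rw [max_eq_left hA, max_eq_right hB, one_mul]
    refine le_max_of_le_right ?_; nlinarith [sq_nonneg (m 0:ℝ)]
  · rw [max_eq_right hA, max_eq_left hB, mul_one]
    refine le_max_of_le_right ?_; nlinarith [sq_nonneg (m 1:ℝ)]
  · rw [max_eq_right hA, max_eq_right hB]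
    refine le_max_of_le_right ?_
    nlinarith [sq_nonneg (|(m 0:ℝ)| - |(m 1:ℝ)|), sq_abs (m 0:ℝ), sq_abs (m 1:ℝ)]

lemma sigma_lt_top {s : ℝ} (hs : 2 < s) :
    ∑' m : Z2, (ENNReal.ofReal (jap m ^ (1 - s))) ^ (2:ℝ) < ⊤ := by
  have hbound : ∀ m : Z2, (ENNReal.ofReal (jap m ^ (1 - s))) ^ (2:ℝ) ≤
      ENNReal.ofReal ((max 1 |(m 0:ℝ)|) ^ (-(s-1))) * ENNReal.ofReal ((max 1 |(m 1:ℝ)|) ^ (-(s-1))) := by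
    intro m
    have hpos := jap_pos m
    have h1 : (ENNReal.ofReal (jap m ^ (1 - s))) ^ (2:ℝ)
        = ENNReal.ofReal ((jap m ^ (2:ℝ)) ^ (-(s-1))) := by
      rw [ENNReal.ofReal_rpow_of_nonneg (Real.rpow_nonneg hpos.le _) (by norm_num : (0:ℝ) ≤ 2)]
      congr 1
      rw [← Real.rpow_mul hpos.le, ← Real.rpow_mul hpos.le]
      ring_nf
    rw [h1, ← ENNReal.ofReal_mul (Real.rpow_nonneg (by positivity) _)]
    apply ENNReal.ofReal_le_ofReal
    have hprod : (max 1 |(m 0:ℝ)|) * (max 1 |(m 1:ℝ)|) ≤ jap m ^ (2:ℝ) := japsq_ge m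
    have hpp : (0:ℝ) < (max 1 |(m 0:ℝ)|) * (max 1 |(m 1:ℝ)|) := by positivity
    calc (jap m ^ (2:ℝ)) ^ (-(s-1))
        ≤ ((max 1 |(m 0:ℝ)|) * (max 1 |(m 1:ℝ)|)) ^ (-(s-1)) :=
          Real.rpow_le_rpow_of_nonpos hpp hprod (by linarith)
      _ = (max 1 |(m 0:ℝ)|) ^ (-(s-1)) * (max 1 |(m 1:ℝ)|) ^ (-(s-1)) :=
          Real.mul_rpow (by positivity) (by positivity)
  calc ∑' m : Z2, (ENNReal.ofReal (jap m ^ (1 - s))) ^ (2:ℝ)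
      ≤ ∑' m : Z2, ENNReal.ofReal ((max 1 |(m 0:ℝ)|) ^ (-(s-1))) * ENNReal.ofReal ((max 1 |(m 1:ℝ)|) ^ (-(s-1))) :=
        ENNReal.tsum_le_tsum hbound
    _ = ∑' p : ℤ × ℤ, ENNReal.ofReal ((max 1 |(p.1:ℝ)|) ^ (-(s-1))) * ENNReal.ofReal ((max 1 |(p.2:ℝ)|) ^ (-(s-1))) := by
        rw [← ((finTwoArrowEquiv ℤ).symm.tsum_eq (fun m : Z2 => ENNReal.ofReal ((max 1 |(m 0:ℝ)|) ^ (-(s-1))) * ENNReal.ofReal ((max 1 |(m 1:ℝ)|) ^ (-(s-1)))))]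
        refine tsum_congr fun p => ?_
        simp [finTwoArrowEquiv]
    _ = (∑' x : ℤ, ENNReal.ofReal ((max 1 |(x:ℝ)|) ^ (-(s-1)))) * (∑' y : ℤ, ENNReal.ofReal ((max 1 |(y:ℝ)|) ^ (-(s-1)))) := by
        rw [ENNReal.tsum_prod (f := fun (x : ℤ) (y : ℤ) => ENNReal.ofReal ((max 1 |(x:ℝ)|) ^ (-(s-1))) * ENNReal.ofReal ((max 1 |(y:ℝ)|) ^ (-(s-1))))]
        simp_rw [ENNReal.tsum_mul_left, ENNReal.tsum_mul_right]
    _ < ⊤ := ENNReal.mul_lt_top (oneD (q := s-1) (by linarith)) (oneD (q := s-1) (by linarith))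

def AA (s : ℝ) (a : Z2 → Fin 2 → ℂ) (m : Z2) : ℝ≥0∞ :=
  ENNReal.ofReal (jap m ^ s) * ((‖a m 0‖₊ : ℝ≥0∞) + (‖a m 1‖₊ : ℝ≥0∞))
def UU (s : ℝ) (u : Z2 → ℂ) (n : Z2) : ℝ≥0∞ :=
  ENNReal.ofReal (jap n ^ s) * (‖u n‖₊ : ℝ≥0∞)
def WW (s : ℝ) (m : Z2) : ℝ≥0∞ := ENNReal.ofReal (jap m ^ (1 - s))

-- real-valued versions
lemma ofReal_norm_eq_coe_nnnorm {E : Type*} [SeminormedAddGroup E] (a : E) :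
    ENNReal.ofReal ‖a‖ = (‖a‖₊ : ℝ≥0∞) := by
  rw [← coe_nnnorm, ENNReal.ofReal_coe_nnreal]

lemma AA_eq (s : ℝ) (a : Z2 → Fin 2 → ℂ) (m : Z2) :
    AA s a m = ENNReal.ofReal (jap m ^ s * (‖a m 0‖ + ‖a m 1‖)) := by
  rw [ENNReal.ofReal_mul (Real.rpow_nonneg (jap_pos m).le s), AA,
    ENNReal.ofReal_add (norm_nonneg _) (norm_nonneg _), ofReal_norm_eq_coe_nnnorm,
    ofReal_norm_eq_coe_nnnorm]

lemma UU_eq (s : ℝ) (u : Z2 → ℂ) (n : Z2) :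
    UU s u n = ENNReal.ofReal (jap n ^ s * ‖u n‖) := by
  rw [ENNReal.ofReal_mul (Real.rpow_nonneg (jap_pos n).le s), UU, ofReal_norm_eq_coe_nnnorm]

-- norm of the symbol sum
lemma symbol_norm_le (a : Z2 → Fin 2 → ℂ) (m n : Z2) :
    ‖∑ i : Fin 2, a m i * (Complex.I * ((n i : ℝ) : ℂ))‖ ≤ (‖a m 0‖ + ‖a m 1‖) * jap n := by
  rw [Fin.sum_univ_two]
  calc ‖a m 0 * (Complex.I * ((n 0 : ℝ):ℂ)) + a m 1 * (Complex.I * ((n 1 : ℝ):ℂ))‖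
      ≤ ‖a m 0 * (Complex.I * ((n 0 : ℝ):ℂ))‖ + ‖a m 1 * (Complex.I * ((n 1 : ℝ):ℂ))‖ :=
        norm_add_le _ _
    _ = ‖a m 0‖ * |(n 0 : ℝ)| + ‖a m 1‖ * |(n 1 : ℝ)| := by
        simp [norm_mul, Complex.norm_real, Real.norm_eq_abs]
    _ ≤ ‖a m 0‖ * jap n + ‖a m 1‖ * jap n := by
        have h0 := abs_coord_le_jap n 0
        have h1 := abs_coord_le_jap n 1
        have := norm_nonneg (a m 0)
        have := norm_nonneg (a m 1)
        nlinarith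
    _ = (‖a m 0‖ + ‖a m 1‖) * jap n := by ring

-- ENNReal Cauchy-Schwarz (proved earlier style)
theorem myCS (f g : Z2 → ℝ≥0∞) : ∑' k, f k * g k ≤ (∑' k, f k ^ (2:ℝ)) ^ (1/2:ℝ) * (∑' k, g k ^ (2:ℝ)) ^ (1/2:ℝ) := by
  have hconj : Real.HolderConjugate 2 2 := Real.HolderConjugate.two_two
  have := ENNReal.lintegral_mul_le_Lp_mul_Lq (MeasureTheory.Measure.count (α := Z2)) hconj (measurable_of_countable f).aemeasurable (measurable_of_countable g).aemeasurable
  simpa [MeasureTheory.lintegral_count, one_div] using this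

-- convolution bound: ∑' m, AA m * UU (k - m) < ⊤
lemma conv_lt_top {s : ℝ} (a : Z2 → Fin 2 → ℂ) (u : Z2 → ℂ)
    (hA2 : ∑' m, AA s a m ^ (2:ℝ) < ⊤) (hU2 : ∑' n, UU s u n ^ (2:ℝ) < ⊤) (k : Z2) :
    ∑' m, AA s a m * UU s u (k - m) < ⊤ := by
  calc ∑' m, AA s a m * UU s u (k - m)
      ≤ (∑' m, AA s a m ^ (2:ℝ)) ^ (1/2:ℝ) * (∑' m, UU s u (k - m) ^ (2:ℝ)) ^ (1/2:ℝ) :=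
        myCS _ _
    _ = (∑' m, AA s a m ^ (2:ℝ)) ^ (1/2:ℝ) * (∑' n, UU s u n ^ (2:ℝ)) ^ (1/2:ℝ) := by
        congr 1
        congr 1
        exact (Equiv.subRight k).symm.tsum_eq (fun n => UU s u n ^ (2:ℝ)) |>.symm ▸
          ((Equiv.subLeft k).tsum_eq (fun n => UU s u n ^ (2:ℝ)))
    _ < ⊤ := ENNReal.mul_lt_top
        (ENNReal.rpow_lt_top_of_nonneg (by norm_num) hA2.ne)
        (ENNReal.rpow_lt_top_of_nonneg (by norm_num) hU2.ne)

lemma enorm_tsum_le (f : Z2 → ℂ) : (‖∑' m, f m‖₊ : ℝ≥0∞) ≤ ∑' m, (‖f m‖₊ : ℝ≥0∞) := by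
  by_cases h : (∑' m, (‖f m‖₊ : ℝ≥0∞)) = ⊤
  · exact h ▸ le_top
  · have hs : Summable (fun m => ‖f m‖₊) := ENNReal.tsum_coe_ne_top_iff_summable.mp h
    rw [← ENNReal.coe_tsum hs]
    exact_mod_cast nnnorm_tsum_le hs

-- ENNReal bound for terms of `transport a u k`
lemma F_bound {s : ℝ} (hs : 2 < s) (a : Z2 → Fin 2 → ℂ) (u : Z2 → ℂ) (k m : Z2) :
    (‖(∑ i : Fin 2, a m i * (Complex.I * (((k - m) i : ℝ) : ℂ))) * u (k - m)‖₊ : ℝ≥0∞)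
      ≤ AA s a m * UU s u (k - m) := by
  have hAnn : (0:ℝ) ≤ jap m ^ s * (‖a m 0‖ + ‖a m 1‖) :=
    mul_nonneg (Real.rpow_nonneg (jap_pos m).le s)
      (add_nonneg (norm_nonneg _) (norm_nonneg _))
  rw [← ofReal_norm_eq_coe_nnnorm, AA_eq, UU_eq, ← ENNReal.ofReal_mul hAnn]
  apply ENNReal.ofReal_le_ofReal
  rw [norm_mul]
  have h1 := symbol_norm_le a m (k - m)
  have h2 : jap (k - m) ≤ jap (k - m) ^ s := by
    nth_rewrite 1 [show jap (k - m) = jap (k - m) ^ (1:ℝ) from (Real.rpow_one _).symm]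
    exact Real.rpow_le_rpow_of_exponent_le (one_le_jap _) (by linarith)
  have h3 : (1:ℝ) ≤ jap m ^ s :=
    Real.one_le_rpow (one_le_jap m) (by linarith)
  have hn := norm_nonneg (u (k - m))
  have ha0 := norm_nonneg (a m 0)
  have ha1 := norm_nonneg (a m 1)
  have hjn := jap_pos (k - m)
  calc ‖∑ i : Fin 2, a m i * (Complex.I * (((k - m) i : ℝ):ℂ))‖ * ‖u (k - m)‖
      ≤ ((‖a m 0‖ + ‖a m 1‖) * jap (k - m)) * ‖u (k - m)‖ := by
        apply mul_le_mul_of_nonneg_right h1 hn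
    _ ≤ ((‖a m 0‖ + ‖a m 1‖) * jap (k - m) ^ s) * ‖u (k - m)‖ := by
        have hσ : (0:ℝ) ≤ ‖a m 0‖ + ‖a m 1‖ := by linarith
        exact mul_le_mul_of_nonneg_right (mul_le_mul_of_nonneg_left h2 hσ) hn
    _ = 1 * (((‖a m 0‖ + ‖a m 1‖) * jap (k - m) ^ s) * ‖u (k - m)‖) := by ring
    _ ≤ jap m ^ s * (((‖a m 0‖ + ‖a m 1‖) * jap (k - m) ^ s) * ‖u (k - m)‖) := by
        apply mul_le_mul_of_nonneg_right h3
        have hp := Real.rpow_nonneg hjn.le s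
        have hσ : (0:ℝ) ≤ ‖a m 0‖ + ‖a m 1‖ := by linarith
        positivity
    _ = (jap m ^ s * (‖a m 0‖ + ‖a m 1‖)) * (jap (k - m) ^ s * ‖u (k - m)‖) := by ring

-- ENNReal bound for terms of `transport a ũ k`
lemma G_bound {s : ℝ} (hs : 2 < s) (a : Z2 → Fin 2 → ℂ) (u : Z2 → ℂ) (k m : Z2) :
    (‖(∑ i : Fin 2, a m i * (Complex.I * (((k - m) i : ℝ) : ℂ)))
        * (((jap (k - m) ^ s : ℝ) : ℂ) * u (k - m))‖₊ : ℝ≥0∞)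
      ≤ ENNReal.ofReal (2 * jap k) * (AA s a m * UU s u (k - m)) := by
  have hAnn : (0:ℝ) ≤ jap m ^ s * (‖a m 0‖ + ‖a m 1‖) :=
    mul_nonneg (Real.rpow_nonneg (jap_pos m).le s)
      (add_nonneg (norm_nonneg _) (norm_nonneg _))
  have h2k : (0:ℝ) ≤ 2 * jap k := by linarith [jap_pos k]
  rw [← ofReal_norm_eq_coe_nnnorm, AA_eq, UU_eq, ← ENNReal.ofReal_mul hAnn,
    ← ENNReal.ofReal_mul h2k]
  apply ENNReal.ofReal_le_ofReal
  rw [norm_mul, norm_mul, Complex.norm_real, Real.norm_eq_abs,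
    abs_of_nonneg (Real.rpow_nonneg (jap_pos _).le s)]
  have h1 := symbol_norm_le a m (k - m)
  -- jap (k-m) ≤ 2 * jap k * jap m  and  jm^{-s} ... we use: jap(k-m) * 1 ≤ jap m ^ s * (2 * jap k)
  have hjm1 : (1:ℝ) ≤ jap m := one_le_jap m
  have hjk1 : (1:ℝ) ≤ jap k := one_le_jap k
  have htri : jap (k - m) ≤ jap k + jap m := by
    have h := jap_triangle (k - m) k
    have : k - m - k = -m := by abel
    rw [this] at h
    have hnen : jap (-m) = jap m := by
      unfold jap
      congr 2
      refine Finset.sum_congr rfl fun i _ => ?_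
      have : ((-m) i : ℝ) = -(m i : ℝ) := by simp
      rw [this]; ring
    rw [hnen] at h; exact h
  have hms : jap m ≤ jap m ^ s := by
    nth_rewrite 1 [show jap m = jap m ^ (1:ℝ) from (Real.rpow_one _).symm]
    exact Real.rpow_le_rpow_of_exponent_le hjm1 (by linarith)
  have hks : jap k ≤ jap k ^ (1:ℝ) := le_of_eq (Real.rpow_one _).symm
  have h2 : jap (k - m) ≤ jap m ^ s * (2 * jap k) := by
    have h3 : (1:ℝ) ≤ jap m ^ s := Real.one_le_rpow hjm1 (by linarith)
    nlinarith
  have hn := norm_nonneg (u (k - m))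
  have ha := add_nonneg (norm_nonneg (a m 0)) (norm_nonneg (a m 1))
  have hjnpos := Real.rpow_nonneg (jap_pos (k - m)).le s
  calc ‖∑ i : Fin 2, a m i * (Complex.I * (((k - m) i : ℝ):ℂ))‖ * (jap (k - m) ^ s * ‖u (k - m)‖)
      ≤ ((‖a m 0‖ + ‖a m 1‖) * jap (k - m)) * (jap (k - m) ^ s * ‖u (k - m)‖) :=
        mul_le_mul_of_nonneg_right h1 (mul_nonneg hjnpos hn)
    _ ≤ ((‖a m 0‖ + ‖a m 1‖) * (jap m ^ s * (2 * jap k))) * (jap (k - m) ^ s * ‖u (k - m)‖) :=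
        mul_le_mul_of_nonneg_right (mul_le_mul_of_nonneg_left h2 ha) (mul_nonneg hjnpos hn)
    _ = 2 * jap k * (jap m ^ s * (‖a m 0‖ + ‖a m 1‖) * (jap (k - m) ^ s * ‖u (k - m)‖)) := by
        ring

-- pointwise bound for the commutator kernel
lemma h_bound {s : ℝ} (hs : 2 < s) (a : Z2 → Fin 2 → ℂ) (u : Z2 → ℂ) (k m : Z2) :
    (‖((jap k ^ s - jap (k - m) ^ s : ℝ) : ℂ)
        * ((∑ i : Fin 2, a m i * (Complex.I * (((k - m) i : ℝ) : ℂ))) * u (k - m))‖₊ : ℝ≥0∞)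
      ≤ ENNReal.ofReal (s * 2 ^ (s-1)) *
          ((WW s m + WW s (k - m)) * (AA s a m * UU s u (k - m))) := by
  have hjm := jap_pos m
  have hjn := jap_pos (k - m)
  have hWsum : WW s m + WW s (k - m) = ENNReal.ofReal (jap m ^ (1-s) + jap (k-m) ^ (1-s)) := by
    rw [WW, WW, ENNReal.ofReal_add (Real.rpow_nonneg hjm.le _) (Real.rpow_nonneg hjn.le _)]
  have hAnn : (0:ℝ) ≤ jap m ^ s * (‖a m 0‖ + ‖a m 1‖) :=
    mul_nonneg (Real.rpow_nonneg hjm.le s) (add_nonneg (norm_nonneg _) (norm_nonneg _))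
  have hUnn : (0:ℝ) ≤ jap (k-m) ^ s * ‖u (k-m)‖ :=
    mul_nonneg (Real.rpow_nonneg hjn.le s) (norm_nonneg _)
  have hWnn : (0:ℝ) ≤ jap m ^ (1-s) + jap (k-m) ^ (1-s) :=
    add_nonneg (Real.rpow_nonneg hjm.le _) (Real.rpow_nonneg hjn.le _)
  have hCnn : (0:ℝ) ≤ s * 2 ^ (s-1) :=
    mul_nonneg (by linarith) (Real.rpow_nonneg (by norm_num) _)
  rw [hWsum, AA_eq, UU_eq, ← ofReal_norm_eq_coe_nnnorm,
    ← ENNReal.ofReal_mul hAnn, ← ENNReal.ofReal_mul hWnn, ← ENNReal.ofReal_mul hCnn]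
  apply ENNReal.ofReal_le_ofReal
  rw [norm_mul, norm_mul, Complex.norm_real, Real.norm_eq_abs]
  have h1 := symbol_norm_le a m (k - m)
  have hkey := key_ineq hs k m
  have habs := abs_nonneg (jap k ^ s - jap (k - m) ^ s)
  have hσ : (0:ℝ) ≤ ‖a m 0‖ + ‖a m 1‖ := add_nonneg (norm_nonneg _) (norm_nonneg _)
  have hn := norm_nonneg (u (k - m))
  calc |jap k ^ s - jap (k - m) ^ s| * (‖∑ i : Fin 2, a m i * (Complex.I * (((k - m) i : ℝ):ℂ))‖ * ‖u (k - m)‖)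
      ≤ |jap k ^ s - jap (k - m) ^ s| * (((‖a m 0‖ + ‖a m 1‖) * jap (k - m)) * ‖u (k - m)‖) := by
        apply mul_le_mul_of_nonneg_left _ habs
        exact mul_le_mul_of_nonneg_right h1 hn
    _ = (|jap k ^ s - jap (k - m) ^ s| * jap (k - m)) * ((‖a m 0‖ + ‖a m 1‖) * ‖u (k - m)‖) := by
        ring
    _ ≤ ((s * 2 ^ (s-1)) * ((jap m ^ (1-s) + jap (k-m) ^ (1-s)) * (jap m ^ s * jap (k-m) ^ s)))
          * ((‖a m 0‖ + ‖a m 1‖) * ‖u (k - m)‖) := by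
        exact mul_le_mul_of_nonneg_right hkey (mul_nonneg hσ hn)
    _ = s * 2 ^ (s-1) * ((jap m ^ (1-s) + jap (k-m) ^ (1-s))
          * (jap m ^ s * (‖a m 0‖ + ‖a m 1‖) * (jap (k-m) ^ s * ‖u (k-m)‖))) := by
        ring

-- main pointwise master bound
lemma master {s : ℝ} (hs : 2 < s) (a : Z2 → Fin 2 → ℂ) (u : Z2 → ℂ)
    (hA2 : ∑' m, AA s a m ^ (2:ℝ) < ⊤) (hU2 : ∑' n, UU s u n ^ (2:ℝ) < ⊤) (k : Z2) :
    (‖commLam s a u k‖₊ : ℝ≥0∞)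
      ≤ ∑' m, ENNReal.ofReal (s * 2 ^ (s-1)) *
          ((WW s m + WW s (k - m)) * (AA s a m * UU s u (k - m))) := by
  set F : Z2 → ℂ := fun m =>
    (∑ i : Fin 2, a m i * (Complex.I * (((k - m) i : ℝ) : ℂ))) * u (k - m) with hF
  set G : Z2 → ℂ := fun m =>
    (∑ i : Fin 2, a m i * (Complex.I * (((k - m) i : ℝ) : ℂ)))
      * (((jap (k - m) ^ s : ℝ) : ℂ) * u (k - m)) with hG
  have hconv := conv_lt_top a u hA2 hU2 k
  -- summability of F
  have hFsum : Summable F := by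
    apply Summable.of_nnnorm
    rw [← ENNReal.tsum_coe_ne_top_iff_summable]
    exact ne_top_of_le_ne_top hconv.ne (ENNReal.tsum_le_tsum (fun m => F_bound hs a u k m))
  have hGsum : Summable G := by
    apply Summable.of_nnnorm
    rw [← ENNReal.tsum_coe_ne_top_iff_summable]
    refine ne_top_of_le_ne_top ?_ (ENNReal.tsum_le_tsum (fun m => G_bound hs a u k m))
    rw [ENNReal.tsum_mul_left]
    exact (ENNReal.mul_lt_top ENNReal.ofReal_lt_top hconv).ne
  -- commLam as a single tsum
  have hrepr : commLam s a u k = ∑' m, (((jap k ^ s : ℝ) : ℂ) * F m - G m) := by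
    rw [commLam]
    have ht1 : transport a u k = ∑' m, F m := rfl
    have ht2 : transport a (fun x => ((jap x ^ s : ℝ) : ℂ) * u x) k = ∑' m, G m := rfl
    rw [ht1, ht2, ← tsum_mul_left]
    exact (Summable.tsum_sub (hFsum.mul_left _) hGsum).symm
  rw [hrepr]
  refine (enorm_tsum_le _).trans (ENNReal.tsum_le_tsum fun m => ?_)
  have hterm : ((jap k ^ s : ℝ) : ℂ) * F m - G m
      = ((jap k ^ s - jap (k - m) ^ s : ℝ) : ℂ)
        * ((∑ i : Fin 2, a m i * (Complex.I * (((k - m) i : ℝ) : ℂ))) * u (k - m)) := by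
    rw [hF, hG]
    push_cast
    ring
  rw [hterm]
  exact h_bound hs a u k m

theorem convL1L2 (f g : Z2 → ℝ≥0∞) :
    (∑' k : Z2, (∑' m : Z2, f m * g (k - m)) ^ (2:ℝ)) ^ (1/2:ℝ)
      ≤ (∑' m : Z2, f m) * (∑' n : Z2, g n ^ (2:ℝ)) ^ (1/2:ℝ) := by
  refine (myMink (fun m k => f m * g (k - m))).trans ?_
  have key : ∀ m : Z2, (∑' k : Z2, (f m * g (k - m)) ^ (2:ℝ)) ^ (1/2:ℝ)
      = f m * (∑' n : Z2, g n ^ (2:ℝ))^(1/2:ℝ) := by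
    intro m
    calc (∑' k : Z2, (f m * g (k - m)) ^ (2:ℝ)) ^ (1/2:ℝ)
        = (f m ^ (2:ℝ) * ∑' k : Z2, g (k - m) ^ (2:ℝ)) ^ (1/2:ℝ) := by
          rw [← ENNReal.tsum_mul_left]
          congr 1
          exact tsum_congr fun k => ENNReal.mul_rpow_of_nonneg _ _ (by norm_num)
      _ = (f m ^ (2:ℝ)) ^ (1/2:ℝ) * (∑' k : Z2, g (k - m) ^ (2:ℝ)) ^ (1/2:ℝ) :=
          ENNReal.mul_rpow_of_nonneg _ _ (by norm_num)
      _ = f m * (∑' n : Z2, g n ^ (2:ℝ)) ^ (1/2:ℝ) := by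
          have htr := (Equiv.subRight m).tsum_eq (fun n => g n ^ (2:ℝ))
          simp only [Equiv.subRight_apply] at htr
          rw [htr, ← ENNReal.rpow_mul]
          norm_num
  rw [tsum_congr key, ENNReal.tsum_mul_right]

lemma p2 (x : ℝ≥0∞) : x ^ (2:ℝ) = x ^ 2 := by
  rw [show (2:ℝ) = ((2:ℕ):ℝ) by norm_num, ENNReal.rpow_natCast]

lemma UU_sq (s : ℝ) (u : Z2 → ℂ) (n : Z2) :
    UU s u n ^ (2:ℝ) = ENNReal.ofReal (jap n ^ (2*s)) * (‖u n‖₊ : ℝ≥0∞) ^ 2 := by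
  rw [UU, ENNReal.mul_rpow_of_nonneg _ _ (by norm_num : (0:ℝ) ≤ 2),
    ENNReal.ofReal_rpow_of_nonneg (Real.rpow_nonneg (jap_pos n).le s) (by norm_num),
    ← Real.rpow_mul (jap_pos n).le, mul_comm s 2, p2]

lemma AA_sq_le (s : ℝ) (a : Z2 → Fin 2 → ℂ) (m : Z2) :
    AA s a m ^ (2:ℝ) ≤ 4 * (ENNReal.ofReal (jap m ^ (2*s)) *
      ((‖a m 0‖₊ : ℝ≥0∞) ^ 2 + (‖a m 1‖₊ : ℝ≥0∞) ^ 2)) := by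
  rw [AA, ENNReal.mul_rpow_of_nonneg _ _ (by norm_num : (0:ℝ) ≤ 2),
    ENNReal.ofReal_rpow_of_nonneg (Real.rpow_nonneg (jap_pos m).le s) (by norm_num),
    ← Real.rpow_mul (jap_pos m).le, mul_comm s 2]
  rw [show 4 * (ENNReal.ofReal (jap m ^ (2*s)) * ((‖a m 0‖₊ : ℝ≥0∞) ^ 2 + (‖a m 1‖₊ : ℝ≥0∞) ^ 2))
    = ENNReal.ofReal (jap m ^ (2*s)) * (4 * ((‖a m 0‖₊ : ℝ≥0∞) ^ 2 + (‖a m 1‖₊ : ℝ≥0∞) ^ 2)) by ring]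
  apply mul_le_mul_right
  set x := (‖a m 0‖₊ : ℝ≥0∞); set y := (‖a m 1‖₊ : ℝ≥0∞)
  rcases le_total x y with h | h
  · calc (x + y) ^ (2:ℝ) ≤ (2 * y) ^ (2:ℝ) :=
        ENNReal.rpow_le_rpow (by rw [two_mul]; exact add_le_add_left h y) (by norm_num)
      _ = 4 * y ^ 2 := by
        rw [ENNReal.mul_rpow_of_nonneg _ _ (by norm_num : (0:ℝ) ≤ 2), p2, p2]
        norm_num
      _ ≤ 4 * (x ^ 2 + y ^ 2) := by
        apply mul_le_mul_right; exact le_add_self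
  · calc (x + y) ^ (2:ℝ) ≤ (2 * x) ^ (2:ℝ) :=
        ENNReal.rpow_le_rpow (by rw [two_mul]; exact add_le_add_right h x) (by norm_num)
      _ = 4 * x ^ 2 := by
        rw [ENNReal.mul_rpow_of_nonneg _ _ (by norm_num : (0:ℝ) ≤ 2), p2, p2]
        norm_num
      _ ≤ 4 * (x ^ 2 + y ^ 2) := by
        apply mul_le_mul_right; exact self_le_add_right _ _


end Aux

/-- **Kato–Ponce commutator estimate:** for `s > 2`, `u ∈ H^s(T²)`,
`a ∈ H^s(T², ℝ²)`: `‖[Λ^s, a·∇]u‖_{L²} ≤ C(s) ‖a‖_{H^s} ‖u‖_{H^s}`. -/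
theorem kato_ponce_commutator (s : ℝ) (hs : s > 2) :
    ∃ C : ℝ≥0, 0 < C ∧ ∀ (a : (Fin 2 → ℤ) → Fin 2 → ℂ) (u : (Fin 2 → ℤ) → ℂ),
      sobNormV s a < ⊤ → sobNorm s u < ⊤ →
      l2Norm (commLam s a u) ≤ (C : ℝ≥0∞) * sobNormV s a * sobNorm s u := by
  have hs' : 2 < s := hs
  set Cs : ℝ≥0∞ := ENNReal.ofReal (s * 2 ^ (s-1)) with hCs
  set σ : ℝ≥0∞ := ∑' m : Z2, (WW s m) ^ (2:ℝ) with hσdef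
  have hσ : σ < ⊤ := sigma_lt_top hs'
  set σh : ℝ≥0∞ := σ ^ (1/2:ℝ) with hσh
  have hσhfin : σh ≠ ⊤ := (ENNReal.rpow_lt_top_of_nonneg (by norm_num) hσ.ne).ne
  set E : ℝ≥0∞ := 4 * Cs * σh with hE
  have hEfin : E ≠ ⊤ := by
    rw [hE]
    exact (ENNReal.mul_lt_top
      (ENNReal.mul_lt_top (by norm_num) ENNReal.ofReal_lt_top)
      (lt_top_iff_ne_top.mpr hσhfin)).ne
  refine ⟨E.toNNReal + 1, add_pos_of_nonneg_of_pos (by positivity) one_pos, ?_⟩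
  have hEC : E ≤ ((E.toNNReal + 1 : ℝ≥0) : ℝ≥0∞) := by
    rw [ENNReal.coe_add, ENNReal.coe_toNNReal hEfin]
    exact le_add_of_nonneg_right (by positivity)
  intro a u hA hU
  -- finiteness
  have hTu : (∑' k : Z2, ENNReal.ofReal (jap k ^ (2*s)) * (‖u k‖₊ : ℝ≥0∞) ^ 2) < ⊤ := by
    by_contra h
    rw [not_lt, top_le_iff] at h
    rw [sobNorm, h, ENNReal.top_rpow_of_pos (by norm_num)] at hU
    exact absurd hU (lt_irrefl ⊤)
  have hTa : (∑' k : Z2, ENNReal.ofReal (jap k ^ (2*s)) *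
      ((‖a k 0‖₊ : ℝ≥0∞) ^ 2 + (‖a k 1‖₊ : ℝ≥0∞) ^ 2)) < ⊤ := by
    by_contra h
    rw [not_lt, top_le_iff] at h
    rw [sobNormV, h, ENNReal.top_rpow_of_pos (by norm_num)] at hA
    exact absurd hA (lt_irrefl ⊤)
  have hU2fin : ∑' n, UU s u n ^ (2:ℝ) < ⊤ := by
    rw [tsum_congr (UU_sq s u)]; exact hTu
  have hA2fin : ∑' m, AA s a m ^ (2:ℝ) < ⊤ := by
    calc ∑' m, AA s a m ^ (2:ℝ) ≤ ∑' m, 4 * (ENNReal.ofReal (jap m ^ (2*s)) *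
        ((‖a m 0‖₊ : ℝ≥0∞) ^ 2 + (‖a m 1‖₊ : ℝ≥0∞) ^ 2)) :=
        ENNReal.tsum_le_tsum (AA_sq_le s a)
      _ = 4 * _ := ENNReal.tsum_mul_left
      _ < ⊤ := ENNReal.mul_lt_top (by norm_num) hTa
  set A2 : ℝ≥0∞ := (∑' m, AA s a m ^ (2:ℝ)) ^ (1/2:ℝ) with hA2def
  set U2 : ℝ≥0∞ := (∑' n, UU s u n ^ (2:ℝ)) ^ (1/2:ℝ) with hU2def
  have hU2eq : U2 = sobNorm s u := by
    rw [hU2def, tsum_congr (UU_sq s u), sobNorm]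
  have hA2le : A2 ≤ 2 * sobNormV s a := by
    rw [hA2def, sobNormV]
    calc (∑' m, AA s a m ^ (2:ℝ)) ^ (1/2:ℝ)
        ≤ (∑' m, 4 * (ENNReal.ofReal (jap m ^ (2*s)) *
            ((‖a m 0‖₊ : ℝ≥0∞) ^ 2 + (‖a m 1‖₊ : ℝ≥0∞) ^ 2))) ^ (1/2:ℝ) :=
          ENNReal.rpow_le_rpow (ENNReal.tsum_le_tsum (AA_sq_le s a)) (by norm_num)
      _ = 2 * (∑' m : Z2, ENNReal.ofReal (jap m ^ (2*s)) *
            ((‖a m 0‖₊ : ℝ≥0∞) ^ 2 + (‖a m 1‖₊ : ℝ≥0∞) ^ 2)) ^ (1/2:ℝ) := by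
          rw [ENNReal.tsum_mul_left, ENNReal.mul_rpow_of_nonneg _ _ (by norm_num : (0:ℝ) ≤ 1/2)]
          congr 1
          rw [show (4:ℝ≥0∞) = 2 ^ (2:ℝ) by rw [p2]; norm_num, ← ENNReal.rpow_mul]
          norm_num
  -- main estimate
  set S1 : Z2 → ℝ≥0∞ := fun k => ∑' m, (WW s m * AA s a m) * UU s u (k - m) with hS1
  set S2 : Z2 → ℝ≥0∞ := fun k => ∑' m, AA s a m * (WW s (k - m) * UU s u (k - m)) with hS2
  have hS2eq : ∀ k, S2 k = ∑' m, (WW s m * UU s u m) * AA s a (k - m) := by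
    intro k
    have htr := (Equiv.subLeft k).tsum_eq (fun m => (WW s m * UU s u m) * AA s a (k - m))
    simp only [Equiv.subLeft_apply] at htr
    rw [hS2, ← htr]
    refine tsum_congr fun m => ?_
    rw [sub_sub_cancel]
    ring
  calc l2Norm (commLam s a u)
      = (∑' k, (‖commLam s a u k‖₊ : ℝ≥0∞) ^ (2:ℝ)) ^ (1/2:ℝ) := by
        rw [l2Norm]; congr 1; exact tsum_congr fun k => (p2 _).symm
    _ ≤ (∑' k, (∑' m, Cs * ((WW s m + WW s (k - m)) * (AA s a m * UU s u (k - m)))) ^ (2:ℝ)) ^ (1/2:ℝ) := by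
        apply ENNReal.rpow_le_rpow _ (by norm_num)
        exact ENNReal.tsum_le_tsum fun k =>
          ENNReal.rpow_le_rpow (master hs' a u hA2fin hU2fin k) (by norm_num)
    _ = (∑' k, (Cs * (S1 k + S2 k)) ^ (2:ℝ)) ^ (1/2:ℝ) := by
        congr 1
        refine tsum_congr fun k => ?_
        congr 1
        calc ∑' m, Cs * ((WW s m + WW s (k - m)) * (AA s a m * UU s u (k - m)))
            = ∑' m, Cs * ((WW s m * AA s a m) * UU s u (k - m)
                + AA s a m * (WW s (k - m) * UU s u (k - m))) :=
              tsum_congr fun m => by ring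
          _ = Cs * (S1 k + S2 k) := by
              rw [ENNReal.tsum_mul_left, ENNReal.tsum_add]
    _ = Cs * (∑' k, (S1 k + S2 k) ^ (2:ℝ)) ^ (1/2:ℝ) := by
        have e1 : ∀ k, (Cs * (S1 k + S2 k)) ^ (2:ℝ) = Cs ^ (2:ℝ) * (S1 k + S2 k) ^ (2:ℝ) :=
          fun k => ENNReal.mul_rpow_of_nonneg _ _ (by norm_num)
        rw [tsum_congr e1, ENNReal.tsum_mul_left,
          ENNReal.mul_rpow_of_nonneg _ _ (by norm_num : (0:ℝ) ≤ 1/2), ← ENNReal.rpow_mul]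
        norm_num
    _ ≤ Cs * ((∑' k, S1 k ^ (2:ℝ)) ^ (1/2:ℝ) + (∑' k, S2 k ^ (2:ℝ)) ^ (1/2:ℝ)) :=
        mul_le_mul_right (myMink2 S1 S2) Cs
    _ ≤ Cs * ((∑' m, WW s m * AA s a m) * U2 + (∑' m, WW s m * UU s u m) * A2) := by
        apply mul_le_mul_right
        apply add_le_add
        · exact convL1L2 (fun m => WW s m * AA s a m) (UU s u)
        · have : (∑' k, S2 k ^ (2:ℝ)) ^ (1/2:ℝ)
              = (∑' k, (∑' m, (WW s m * UU s u m) * AA s a (k - m)) ^ (2:ℝ)) ^ (1/2:ℝ) := by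
            congr 1
            exact tsum_congr fun k => by rw [hS2eq k]
          rw [this]
          exact convL1L2 (fun m => WW s m * UU s u m) (AA s a)
    _ ≤ Cs * ((σh * A2) * U2 + (σh * U2) * A2) := by
        apply mul_le_mul_right
        apply add_le_add
        · exact mul_le_mul_left (myCS (WW s) (AA s a)) U2
        · exact mul_le_mul_left (myCS (WW s) (UU s u)) A2
    _ = (2 * Cs * σh) * (A2 * U2) := by ring
    _ ≤ (2 * Cs * σh) * ((2 * sobNormV s a) * sobNorm s u) := by
        apply mul_le_mul_right
        rw [← hU2eq]
        exact mul_le_mul' hA2le le_rfl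
    _ = E * sobNormV s a * sobNorm s u := by rw [hE]; ring
    _ ≤ ((E.toNNReal + 1 : ℝ≥0) : ℝ≥0∞) * sobNormV s a * sobNorm s u := by
        exact mul_le_mul_left (mul_le_mul_left hEC _) _
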